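/- For every policy π ∈ Π, the system of differential equations ∂v/∂t(t,x) + Σ_{S∈𝒜(x)} H(t,x,S,v(·,·)) π(S|t,x) + γ ℋ(π(·|t,x)) = 0 for (t,x) ∈ [0,T)×𝒳, with terminal condition v(T,x) = 0 for all x ∈ 𝒳, admits a solution v ∈ C^{1,0}([0,T]×𝒳); namely v(t,x) = e^{−βt} ψ*(t,x), where β = 2λ+1 and ψ* is the unique fixed point of the contraction ℒψ(t,x) = e^{βt} ∫_t^T { R(s,x) + Σ_{S∈𝒜(x)} ( Σ_{y∈𝒳} e^{−βs} ψ(s,y) q(y|s,x,S) ) π(S|s,x) } ds on the Banach space of bounded Borel measurable functions with the sup norm, where R(s,x) = Σ_{S∈𝒜(x)} r(S) π(S|s,x) + γ ℋ(π(·|s,x)). -/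

import Mathlib

open MeasureTheory intervalIntegral

namespace RLNRM

/-- Primitives of the choice-based network revenue management model:
`m` resources with initial inventory `c`, `n` products with prices `p`,
consumption matrix `A`, Poisson arrival rate `lam` on the horizon `[0,T]`,
MNL-type choice probabilities `P j S` (buy `j` when offered `S`) and `P0 S`
(no purchase), and entropy temperature `gamma`. -/
structure NRM (m n : ℕ) where
  c : Fin m → ℕ
  A : Fin m → Fin n → ℕ
  p : Fin n → ℝ
  lam : ℝ
  lam_pos : 0 < lam
  T : ℝ
  T_pos : 0 < T
  gamma : ℝ
  gamma_nonneg : 0 ≤ gamma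
  P : Finset (Fin n) → Fin n → ℝ
  P0 : Finset (Fin n) → ℝ
  P_nonneg : ∀ S j, 0 ≤ P S j
  P0_nonneg : ∀ S, 0 ≤ P0 S
  P_sum_one : ∀ S, P0 S + ∑ j ∈ S, P S j = 1
  P_not_mem : ∀ S j, j ∉ S → P S j = 0

variable {m n : ℕ}

/-- The `j`-th column of the consumption matrix, as an integer vector. -/
def NRM.col (M : NRM m n) (j : Fin n) : Fin m → ℤ := fun i => (M.A i j : ℤ)

/-- The initial inventory as an integer vector. -/
def NRM.cZ (M : NRM m n) : Fin m → ℤ := fun i => (M.c i : ℤ)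

/-- The state space `𝒳 = {0,…,c 1} × ⋯ × {0,…,c m}`. -/
noncomputable def NRM.States (M : NRM m n) : Finset (Fin m → ℤ) :=
  Fintype.piFinset fun i => Finset.Icc 0 (M.c i : ℤ)

/-- The feasible assortments `𝒜(x)` at state `x`. -/
def NRM.feas (M : NRM m n) (x : Fin m → ℤ) : Finset (Finset (Fin n)) :=
  Finset.univ.filter fun S => ∀ j ∈ S, ∀ i, (M.A i j : ℤ) ≤ x i

/-- The controlled transition rates `q(y | t, x, S)`. -/
noncomputable def NRM.q (M : NRM m n) (_t : ℝ) (x : Fin m → ℤ) (S : Finset (Fin n))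
    (y : Fin m → ℤ) : ℝ :=
  if y = x then -(M.lam * (1 - M.P0 S))
  else ∑ j ∈ Finset.univ.filter (fun j : Fin n => M.col j = x - y), M.lam * M.P S j

/-- The revenue rate `r(S) = λ ∑ j, p j * P j S`. -/
noncomputable def NRM.r (M : NRM m n) (S : Finset (Fin n)) : ℝ :=
  M.lam * ∑ j, M.p j * M.P S j

/-- The Hamiltonian `H(t, x, S, v) = r S + ∑_{y ∈ 𝒳} v t y * q (y | t, x, S)`. -/
noncomputable def NRM.H (M : NRM m n) (t : ℝ) (x : Fin m → ℤ) (S : Finset (Fin n))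
    (v : ℝ → (Fin m → ℤ) → ℝ) : ℝ :=
  M.r S + ∑ y ∈ M.States, v t y * M.q t x S y

/-- An admissible randomized Markov policy. -/
structure Policy (M : NRM m n) where
  π : ℝ → (Fin m → ℤ) → Finset (Fin n) → ℝ
  measurable_t : ∀ x S, Measurable fun t => π t x S
  nonneg : ∀ t x S, 0 ≤ π t x S
  sum_one : ∀ t x, ∑ S : Finset (Fin n), π t x S = 1
  supported : ∀ t x S, S ∉ M.feas x → π t x S = 0
  continuous_t : ∀ x S, Continuous fun t => π t x S

/-- The entropy `ℋ(π(·|t,x)) = -∑_{S ∈ 𝒜(x)} π(S|t,x) log π(S|t,x)`. -/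
noncomputable def NRM.ent (M : NRM m n) (pol : Policy M) (t : ℝ) (x : Fin m → ℤ) : ℝ :=
  -∑ S ∈ M.feas x, pol.π t x S * Real.log (pol.π t x S)

/-- `v ∈ C^{1,0}([0,T] × 𝒳)`: continuously differentiable in `t` for each state `x`. -/
def NRM.C10 (M : NRM m n) (v : ℝ → (Fin m → ℤ) → ℝ) : Prop :=
  ∀ x ∈ M.States, ContDiffOn ℝ 1 (fun t => v t x) (Set.Icc 0 M.T)

/-- The time derivative `∂v/∂t (t,x)` (within the horizon `[0,T]`). -/
noncomputable def NRM.dvt (M : NRM m n) (v : ℝ → (Fin m → ℤ) → ℝ) (t : ℝ)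
    (x : Fin m → ℤ) : ℝ :=
  derivWithin (fun s => v s x) (Set.Icc 0 M.T) t

/-- Right-continuous state path built from the jump data of a trajectory:
`x0` initial state, `L` jumps at times `τ k` selling products `prd k`. -/
noncomputable def pathX (M : NRM m n) (x0 : Fin m → ℤ) (L : ℕ) (τ : ℕ → ℝ)
    (prd : ℕ → Fin n) (t : ℝ) : Fin m → ℤ :=
  x0 - ∑ k ∈ (Finset.range L).filter (fun k => τ k ≤ t), M.col (prd k)

/-- Left limit `X_{t-}` of the state path. -/
noncomputable def pathXleft (M : NRM m n) (x0 : Fin m → ℤ) (L : ℕ) (τ : ℕ → ℝ)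
    (prd : ℕ → Fin n) (t : ℝ) : Fin m → ℤ :=
  x0 - ∑ k ∈ (Finset.range L).filter (fun k => τ k < t), M.col (prd k)

/-- A probabilistic model of the controlled sales process under policy `pol`:
`law t x` is the law of the trajectory conditional on `X_t = x` (Markov family);
a trajectory is described by its `L` sale events, with jump times `τ`, sold
products `prd`, and offered assortments `act`.  The fields record that jumps lie
in `(t, T]`, are ordered, keep the state in `𝒳`, that the sold product belongs to
the offered assortment, and that sales of product `j` have intensity
`λ ∑_{S ∈ 𝒜(X_{s-})} P j S * π(S | s, X_{s-})`. -/
structure SampleModel (M : NRM m n) (pol : Policy M) (Ω : Type*)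
    [MeasurableSpace Ω] where
  law : ℝ → (Fin m → ℤ) → Measure Ω
  law_prob : ∀ t x, IsProbabilityMeasure (law t x)
  L : Ω → ℕ
  τ : Ω → ℕ → ℝ
  prd : Ω → ℕ → Fin n
  act : Ω → ℕ → Finset (Fin n)
  meas_L : Measurable L
  meas_τ : ∀ k, Measurable fun ω => τ ω k
  meas_prd : ∀ k, Measurable fun ω => prd ω k
  jumps_mem : ∀ t x, ∀ᵐ ω ∂law t x, ∀ k < L ω, t < τ ω k ∧ τ ω k ≤ M.T
  jumps_mono : ∀ t x, ∀ᵐ ω ∂law t x, ∀ k l, k < l → l < L ω → τ ω k < τ ω l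
  states_mem : ∀ t x, x ∈ M.States →
    ∀ᵐ ω ∂law t x, ∀ s : ℝ, pathX M x (L ω) (τ ω) (prd ω) s ∈ M.States
  sold_in_act : ∀ t x, ∀ᵐ ω ∂law t x, ∀ k < L ω, prd ω k ∈ act ω k
  intensity : ∀ t x, x ∈ M.States → 0 ≤ t → ∀ (j : Fin n) (u : ℝ), t ≤ u → u ≤ M.T →
    (∫ ω, ((((Finset.range (L ω)).filter fun k => τ ω k ≤ u ∧ prd ω k = j).card : ℝ))
        ∂law t x)
      = ∫ ω, (∫ s in t..u, M.lam *
          ∑ S ∈ M.feas (pathXleft M x (L ω) (τ ω) (prd ω) s),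
            M.P S j * pol.π s (pathXleft M x (L ω) (τ ω) (prd ω) s) S) ∂law t x

variable {M : NRM m n} {pol : Policy M} {Ω : Type*} [MeasurableSpace Ω]

/-- The pathwise reward-plus-entropy-bonus collected on `(t, T]` by a trajectory
started at `(t, x)`: `∫_{(t,T]} p^⊤ dN_s + γ ∫_t^T ℋ(π(·|s, X_{s-})) ds`. -/
noncomputable def SampleModel.rew (V : SampleModel M pol Ω) (t : ℝ) (x : Fin m → ℤ)
    (ω : Ω) : ℝ :=
  (∑ k ∈ Finset.range (V.L ω), if t < V.τ ω k ∧ V.τ ω k ≤ M.T then M.p (V.prd ω k) else 0)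
    + M.gamma * ∫ s in t..M.T, M.ent pol s (pathXleft M x (V.L ω) (V.τ ω) (V.prd ω) s)

/-- The entropy-regularized value function
`J(t,x;π) = E[∫_{(t,T]} p^⊤ dN_s + γ ∫_t^T ℋ(π(·|s, X_{s-})) ds | X_t = x]`. -/
noncomputable def SampleModel.J (V : SampleModel M pol Ω) (t : ℝ) (x : Fin m → ℤ) : ℝ :=
  ∫ ω, V.rew t x ω ∂V.law t x

end RLNRM

namespace RLNRM

/-- The operator `ℒ` on `B([0,T] × 𝒳)`:
`(ℒψ)(t,x) = e^{βt} ∫_t^T { R(s,x) + ∑_{S ∈ 𝒜(x)} (∑_{y ∈ 𝒳} e^{-βs} ψ(s,y) q(y|s,x,S)) π(S|s,x) } ds`,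
with `β = 2λ + 1` and `R(s,x) = ∑_{S ∈ 𝒜(x)} r(S) π(S|s,x) + γ ℋ(π(·|s,x))`. -/
noncomputable def NRM.Lop {m n : ℕ} (M : NRM m n) (pol : Policy M)
    (ψ : ℝ → (Fin m → ℤ) → ℝ) (t : ℝ) (x : Fin m → ℤ) : ℝ :=
  Real.exp ((2 * M.lam + 1) * t) *
    ∫ s in t..M.T,
      ((∑ S ∈ M.feas x, M.r S * pol.π s x S) + M.gamma * M.ent pol s x
        + ∑ S ∈ M.feas x,
            (∑ y ∈ M.States, Real.exp (-((2 * M.lam + 1) * s)) * ψ s y * M.q s x S y)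
              * pol.π s x S)

end RLNRM

/-!
The integrand of `ℒψ` is `R + 𝒢 v` with `v(s, ·) = e^{-βs} ψ(s, ·)`, where `𝒢` is the generator
averaged over the policy. Each row of the rate matrix `q` has total absolute mass at most `2λ`, so
`|ℒψ - ℒφ|(t) ≤ e^{βt} ∫_t^T 2λ e^{-βs} ‖ψ - φ‖ ds ≤ 2λ/β ‖ψ - φ‖`: with `β = 2λ + 1`, `ℒ` is a
contraction. Banach's theorem on the complete space `C([0,T] × 𝒳)` gives a continuous fixed point
`ψ*`, and the same estimate shows that no other bounded measurable fixed point exists. Finally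
`e^{-βt} ψ*(t,x) = ∫_t^T (R + 𝒢 v)(s,x) ds` with a continuous integrand, so the fundamental
theorem of calculus yields the differential equation and the terminal condition.
-/

open Set

theorem abs_sum_mul_le_of_sum_le_one {ι : Type*} {s : Finset ι} {a w : ι → ℝ} {B : ℝ}
    (hB : 0 ≤ B) (hw : ∀ i ∈ s, 0 ≤ w i) (hw1 : ∑ i ∈ s, w i ≤ 1)
    (ha : ∀ i ∈ s, |a i| ≤ B) : |∑ i ∈ s, a i * w i| ≤ B :=
  calc |∑ i ∈ s, a i * w i|
      ≤ ∑ i ∈ s, |a i| * w i := by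
        refine (Finset.abs_sum_le_sum_abs _ _).trans_eq (Finset.sum_congr rfl fun i hi => ?_)
        rw [abs_mul, abs_of_nonneg (hw i hi)]
    _ ≤ ∑ i ∈ s, B * w i := Finset.sum_le_sum fun i hi => by gcongr; exacts [hw i hi, ha i hi]
    _ ≤ B := by rw [← Finset.mul_sum]; exact mul_le_of_le_one_right hB hw1

theorem abs_sum_mul_le_mul_sum_abs {ι : Type*} {s : Finset ι} {v w : ι → ℝ} {d : ℝ}
    (hv : ∀ i ∈ s, |v i| ≤ d) : |∑ i ∈ s, v i * w i| ≤ d * ∑ i ∈ s, |w i| :=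
  calc |∑ i ∈ s, v i * w i|
      ≤ ∑ i ∈ s, |v i| * |w i| := by
        simpa only [abs_mul] using Finset.abs_sum_le_sum_abs (fun i => v i * w i) s
    _ ≤ ∑ i ∈ s, d * |w i| := Finset.sum_le_sum fun i hi => by gcongr; exact hv i hi
    _ = d * ∑ i ∈ s, |w i| := (Finset.mul_sum _ _ _).symm

theorem integral_exp_neg_mul_le {b : ℝ} (hb : 0 < b) (t u : ℝ) :
    ∫ s in t..u, Real.exp (-(b * s)) ≤ Real.exp (-(b * t)) / b := by
  have h : ∫ s in t..u, Real.exp (-(b * s))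
      = (Real.exp (-(b * t)) - Real.exp (-(b * u))) / b := by
    simp only [← neg_mul]
    rw [intervalIntegral.integral_comp_mul_left (fun s => Real.exp s) (neg_ne_zero.2 hb.ne'),
      integral_exp, smul_eq_mul]
    field_simp
    ring
  rw [h]
  gcongr
  linarith [Real.exp_pos (-(b * u))]

theorem eq_zero_of_forall_abs_le_mul {α : Type*} {s : Set α} {f : α → ℝ} {K C : ℝ}
    (hK0 : 0 ≤ K) (hK : K < 1) (hC : ∀ a ∈ s, |f a| ≤ C)
    (hf : ∀ D, (∀ a ∈ s, |f a| ≤ D) → ∀ a ∈ s, |f a| ≤ K * D) :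
    ∀ a ∈ s, f a = 0 := by
  have hpow : ∀ k : ℕ, ∀ a ∈ s, |f a| ≤ K ^ k * C := by
    intro k
    induction k with
    | zero => simpa using hC
    | succ k ih => simpa only [pow_succ', mul_assoc] using hf _ ih
  intro a ha
  have hlim := (tendsto_pow_atTop_nhds_zero_of_lt_one hK0 hK).mul_const C
  rw [zero_mul] at hlim
  exact abs_nonpos_iff.1 (ge_of_tendsto' hlim fun k => hpow k a ha)

theorem hasDerivAt_integral_left_of_continuous {g : ℝ → ℝ} (hg : Continuous g) (b t : ℝ) :
    HasDerivAt (fun u => ∫ s in u..b, g s) (-g t) t :=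
  intervalIntegral.integral_hasDerivAt_left (hg.intervalIntegrable _ _)
    (hg.stronglyMeasurableAtFilter _ _) hg.continuousAt

theorem contDiff_integral_left_of_continuous {g : ℝ → ℝ} (hg : Continuous g) (b : ℝ) :
    ContDiff ℝ 1 fun u => ∫ s in u..b, g s := by
  refine contDiff_one_iff_deriv.2
    ⟨fun t => (hasDerivAt_integral_left_of_continuous hg b t).differentiableAt, ?_⟩
  rw [funext fun t => (hasDerivAt_integral_left_of_continuous hg b t).deriv]
  exact hg.neg

namespace RLNRM

theorem Policy.sum_feas_eq_one {m n : ℕ} {M : NRM m n} (pol : Policy M) (t : ℝ)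
    (x : Fin m → ℤ) : ∑ S ∈ M.feas x, pol.π t x S = 1 := by
  rw [← pol.sum_one t x]
  exact Finset.sum_subset (Finset.subset_univ _) fun S _ hS => pol.supported t x S hS

namespace NRM

variable {m n : ℕ} (M : NRM m n) (pol : Policy M)

theorem zero_mem_States : (0 : Fin m → ℤ) ∈ M.States := by
  simp [NRM.States]

theorem sum_P_eq_one_sub_P0 (S : Finset (Fin n)) : ∑ j, M.P S j = 1 - M.P0 S := by
  rw [← Finset.sum_subset (Finset.subset_univ S) fun j _ hj => M.P_not_mem S j hj]
  linarith [M.P_sum_one S]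

theorem abs_q_le (t : ℝ) (x : Fin m → ℤ) (S : Finset (Fin n)) (y : Fin m → ℤ) :
    |M.q t x S y| ≤ (if y = x then M.lam * (1 - M.P0 S) else 0)
      + ∑ j with x - M.col j = y, M.lam * M.P S j := by
  have hjump : 0 ≤ ∑ j with x - M.col j = y, M.lam * M.P S j :=
    Finset.sum_nonneg fun j _ => mul_nonneg M.lam_pos.le (M.P_nonneg S j)
  have hleave : 0 ≤ M.lam * (1 - M.P0 S) := by
    rw [← sum_P_eq_one_sub_P0]
    exact mul_nonneg M.lam_pos.le (Finset.sum_nonneg fun j _ => M.P_nonneg S j)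
  by_cases hyx : y = x
  · simp only [NRM.q, if_pos hyx, abs_neg, abs_of_nonneg hleave]
    linarith
  · have hfilter : (Finset.univ.filter fun j => M.col j = x - y)
        = Finset.univ.filter fun j => x - M.col j = y := by
      refine Finset.filter_congr fun j _ => ⟨fun h => by rw [h, sub_sub_cancel], ?_⟩
      rintro rfl
      rw [sub_sub_cancel]
    rw [NRM.q, if_neg hyx, if_neg hyx, hfilter, abs_of_nonneg hjump, zero_add]

theorem sum_abs_q_le (t : ℝ) (x : Fin m → ℤ) (S : Finset (Fin n)) :
    ∑ y ∈ M.States, |M.q t x S y| ≤ 2 * M.lam := by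
  have hleave : ∑ y ∈ M.States, (if y = x then M.lam * (1 - M.P0 S) else 0)
      ≤ M.lam * (1 - M.P0 S) := by
    rw [Finset.sum_ite_eq']
    split_ifs
    · exact le_rfl
    · rw [← sum_P_eq_one_sub_P0]
      exact mul_nonneg M.lam_pos.le (Finset.sum_nonneg fun j _ => M.P_nonneg S j)
  have hjump : ∑ y ∈ M.States, ∑ j with x - M.col j = y, M.lam * M.P S j
      ≤ M.lam * (1 - M.P0 S) := by
    rw [← sum_P_eq_one_sub_P0, Finset.mul_sum]
    exact Finset.sum_fiberwise_le_sum_of_sum_fiber_nonneg fun y _ =>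
      Finset.sum_nonneg fun j _ => mul_nonneg M.lam_pos.le (M.P_nonneg S j)
  have hP0 : 0 ≤ M.lam * M.P0 S := mul_nonneg M.lam_pos.le (M.P0_nonneg S)
  calc ∑ y ∈ M.States, |M.q t x S y|
      ≤ ∑ y ∈ M.States, ((if y = x then M.lam * (1 - M.P0 S) else 0)
          + ∑ j with x - M.col j = y, M.lam * M.P S j) :=
        Finset.sum_le_sum fun y _ => M.abs_q_le t x S y
    _ ≤ 2 * M.lam := by rw [Finset.sum_add_distrib]; linarith

noncomputable def runningReward (s : ℝ) (x : Fin m → ℤ) : ℝ :=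
  ∑ S ∈ M.feas x, M.r S * pol.π s x S + M.gamma * M.ent pol s x

noncomputable def generator (v : ℝ → (Fin m → ℤ) → ℝ) (s : ℝ) (x : Fin m → ℤ) : ℝ :=
  ∑ S ∈ M.feas x, (∑ y ∈ M.States, v s y * M.q s x S y) * pol.π s x S

noncomputable def discount (ψ : ℝ → (Fin m → ℤ) → ℝ) : ℝ → (Fin m → ℤ) → ℝ :=
  fun s y => Real.exp (-((2 * M.lam + 1) * s)) * ψ s y

theorem Lop_eq (ψ : ℝ → (Fin m → ℤ) → ℝ) (t : ℝ) (x : Fin m → ℤ) :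
    M.Lop pol ψ t x = Real.exp ((2 * M.lam + 1) * t) *
      ∫ s in t..M.T, (M.runningReward pol s x + M.generator pol (M.discount ψ) s x) :=
  rfl

theorem sum_H_mul_π (t : ℝ) (x : Fin m → ℤ) (v : ℝ → (Fin m → ℤ) → ℝ) :
    ∑ S ∈ M.feas x, M.H t x S v * pol.π t x S
      = ∑ S ∈ M.feas x, M.r S * pol.π t x S + M.generator pol v t x := by
  simp only [NRM.H, add_mul, Finset.sum_add_distrib, generator]

theorem generator_sub (v w : ℝ → (Fin m → ℤ) → ℝ) (s : ℝ) (x : Fin m → ℤ) :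
    M.generator pol (v - w) s x = M.generator pol v s x - M.generator pol w s x := by
  simp only [generator, Pi.sub_apply, sub_mul, Finset.sum_sub_distrib]

theorem discount_sub (ψ φ : ℝ → (Fin m → ℤ) → ℝ) :
    M.discount (ψ - φ) = M.discount ψ - M.discount φ := by
  funext s y
  simp only [discount, Pi.sub_apply, mul_sub]

theorem abs_discount_le {ψ : ℝ → (Fin m → ℤ) → ℝ} {s : ℝ} {y : Fin m → ℤ} {C : ℝ}
    (h : |ψ s y| ≤ C) : |M.discount ψ s y| ≤ Real.exp (-((2 * M.lam + 1) * s)) * C := by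
  rw [discount, abs_mul, Real.abs_exp]
  gcongr

theorem abs_generator_le {v : ℝ → (Fin m → ℤ) → ℝ} {s : ℝ} {x : Fin m → ℤ} {d : ℝ}
    (hv : ∀ y ∈ M.States, |v s y| ≤ d) : |M.generator pol v s x| ≤ 2 * M.lam * d := by
  have hd : 0 ≤ d := (abs_nonneg _).trans (hv 0 M.zero_mem_States)
  refine abs_sum_mul_le_of_sum_le_one (by nlinarith [M.lam_pos]) (fun S _ => pol.nonneg s x S)
    (pol.sum_feas_eq_one s x).le fun S _ => ?_
  calc |∑ y ∈ M.States, v s y * M.q s x S y|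
      ≤ d * ∑ y ∈ M.States, |M.q s x S y| := abs_sum_mul_le_mul_sum_abs hv
    _ ≤ d * (2 * M.lam) := by gcongr; exact M.sum_abs_q_le s x S
    _ = 2 * M.lam * d := mul_comm _ _

theorem continuous_runningReward (x : Fin m → ℤ) :
    Continuous fun s => M.runningReward pol s x := by
  have hπ := fun S => pol.continuous_t x S
  simp only [runningReward, NRM.ent]
  fun_prop

theorem continuous_discount {ψ : ℝ → (Fin m → ℤ) → ℝ} (hψ : ∀ y, Continuous fun s => ψ s y)
    (y : Fin m → ℤ) : Continuous fun s => M.discount ψ s y := by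
  unfold discount
  fun_prop

theorem continuous_generator {v : ℝ → (Fin m → ℤ) → ℝ} (hv : ∀ y, Continuous fun s => v s y)
    (x : Fin m → ℤ) : Continuous fun s => M.generator pol v s x := by
  have hπ := fun S => pol.continuous_t x S
  simp only [generator, NRM.q]
  fun_prop

theorem measurable_generator {v : ℝ → (Fin m → ℤ) → ℝ} (hv : ∀ y, Measurable fun s => v s y)
    (x : Fin m → ℤ) : Measurable fun s => M.generator pol v s x := by
  have hπ := fun S => pol.measurable_t x S
  simp only [generator, NRM.q]
  fun_prop

theorem contraction_nonneg : 0 ≤ 2 * M.lam / (2 * M.lam + 1) :=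
  div_nonneg (by linarith [M.lam_pos]) (by linarith [M.lam_pos])

theorem contraction_lt_one : 2 * M.lam / (2 * M.lam + 1) < 1 :=
  (div_lt_one (by linarith [M.lam_pos])).2 (by linarith)

theorem abs_Lop_sub_le {ψ φ : ℝ → (Fin m → ℤ) → ℝ} {t : ℝ} {x : Fin m → ℤ} {d : ℝ}
    (htT : t ≤ M.T)
    (hψ : IntervalIntegrable (fun s => M.generator pol (M.discount ψ) s x) volume t M.T)
    (hφ : IntervalIntegrable (fun s => M.generator pol (M.discount φ) s x) volume t M.T)
    (hd : ∀ s ∈ Icc t M.T, ∀ y ∈ M.States, |ψ s y - φ s y| ≤ d) :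
    |M.Lop pol ψ t x - M.Lop pol φ t x| ≤ 2 * M.lam / (2 * M.lam + 1) * d := by
  have hR := (M.continuous_runningReward pol x).intervalIntegrable (μ := volume) t M.T
  have hdiff : M.Lop pol ψ t x - M.Lop pol φ t x = Real.exp ((2 * M.lam + 1) * t) *
      ∫ s in t..M.T, M.generator pol (M.discount (ψ - φ)) s x := by
    rw [Lop_eq, Lop_eq, ← mul_sub, ← intervalIntegral.integral_sub (hR.add hψ) (hR.add hφ)]
    simp only [discount_sub, generator_sub, add_sub_add_left_eq_sub]
  set β := 2 * M.lam + 1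
  have hβ : 0 < β := by linarith [M.lam_pos]
  have hd0 : 0 ≤ d := (abs_nonneg _).trans (hd t (left_mem_Icc.2 htT) 0 M.zero_mem_States)
  have hbound : |∫ s in t..M.T, M.generator pol (M.discount (ψ - φ)) s x|
      ≤ ∫ s in t..M.T, 2 * M.lam * d * Real.exp (-(β * s)) := by
    have hg : Continuous fun s => 2 * M.lam * d * Real.exp (-(β * s)) := by fun_prop
    rw [← Real.norm_eq_abs]
    refine intervalIntegral.norm_integral_le_of_norm_le htT (ae_of_all volume fun s hs => ?_)
      (hg.intervalIntegrable _ _)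
    rw [Real.norm_eq_abs, mul_assoc, mul_comm d]
    exact M.abs_generator_le pol fun y hy =>
      M.abs_discount_le (ψ := ψ - φ) (hd s (Ioc_subset_Icc_self hs) y hy)
  calc |M.Lop pol ψ t x - M.Lop pol φ t x|
      = Real.exp (β * t) * |∫ s in t..M.T, M.generator pol (M.discount (ψ - φ)) s x| := by
        rw [hdiff, abs_mul, Real.abs_exp]
    _ ≤ Real.exp (β * t) * (2 * M.lam * d * (Real.exp (-(β * t)) / β)) := by
        rw [intervalIntegral.integral_const_mul] at hbound
        gcongr
        exact hbound.trans (mul_le_mul_of_nonneg_left (integral_exp_neg_mul_le hβ t M.T)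
          (mul_nonneg (by linarith [M.lam_pos]) hd0))
    _ = 2 * M.lam / β * d := by
        rw [Real.exp_neg]
        field_simp

theorem intervalIntegrable_generator_discount {ψ : ℝ → (Fin m → ℤ) → ℝ}
    (hm : ∀ y, Measurable fun s => ψ s y) {C : ℝ}
    (hC : ∀ s ∈ Icc 0 M.T, ∀ y ∈ M.States, |ψ s y| ≤ C) {t : ℝ} (ht : t ∈ Icc 0 M.T)
    (x : Fin m → ℤ) :
    IntervalIntegrable (fun s => M.generator pol (M.discount ψ) s x) volume t M.T := by
  have hdisc : ∀ y, Measurable fun s => M.discount ψ s y := fun y =>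
    (by fun_prop : Measurable fun s => Real.exp (-((2 * M.lam + 1) * s))).mul (hm y)
  refine IntervalIntegrable.mono_fun'
    ((by fun_prop : Continuous fun s => 2 * M.lam * (Real.exp (-((2 * M.lam + 1) * s)) * C)
      ).intervalIntegrable _ _)
    (M.measurable_generator pol hdisc x).aestronglyMeasurable
    ((ae_restrict_iff' measurableSet_uIoc).2 (ae_of_all _ fun s hs => ?_))
  rw [uIoc_of_le ht.2] at hs
  exact M.abs_generator_le pol fun y hy =>
    M.abs_discount_le (hC s ⟨ht.1.trans hs.1.le, hs.2⟩ y hy)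

theorem eq_of_Lop_fixed {ψ φ : ℝ → (Fin m → ℤ) → ℝ}
    (hψm : ∀ y, Measurable fun s => ψ s y) (hφm : ∀ y, Measurable fun s => φ s y)
    (hψb : ∃ C, ∀ t ∈ Icc 0 M.T, ∀ x ∈ M.States, |ψ t x| ≤ C)
    (hφb : ∃ C, ∀ t ∈ Icc 0 M.T, ∀ x ∈ M.States, |φ t x| ≤ C)
    (hψ : ∀ t ∈ Icc 0 M.T, ∀ x ∈ M.States, M.Lop pol ψ t x = ψ t x)
    (hφ : ∀ t ∈ Icc 0 M.T, ∀ x ∈ M.States, M.Lop pol φ t x = φ t x) :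
    ∀ t ∈ Icc 0 M.T, ∀ x ∈ M.States, ψ t x = φ t x := by
  obtain ⟨Cψ, hCψ⟩ := hψb
  obtain ⟨Cφ, hCφ⟩ := hφb
  have hzero := eq_zero_of_forall_abs_le_mul (s := Icc 0 M.T ×ˢ (M.States : Set _))
    (f := fun p => ψ p.1 p.2 - φ p.1 p.2) (C := Cψ + Cφ)
    M.contraction_nonneg M.contraction_lt_one
    (fun p hp => (abs_sub _ _).trans (add_le_add (hCψ _ hp.1 _ hp.2) (hCφ _ hp.1 _ hp.2)))
    (fun D hD p hp => by
      obtain ⟨ht, hx⟩ := hp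
      rw [← hψ _ ht _ hx, ← hφ _ ht _ hx]
      exact M.abs_Lop_sub_le pol ht.2 (M.intervalIntegrable_generator_discount pol hψm hCψ ht _)
        (M.intervalIntegrable_generator_discount pol hφm hCφ ht _)
        fun s hs y hy => hD (s, y) ⟨⟨ht.1.trans hs.1, hs.2⟩, hy⟩)
  exact fun t ht x hx => sub_eq_zero.1 (hzero (t, x) ⟨ht, hx⟩)

theorem continuous_Lop_integrand {ψ : ℝ → (Fin m → ℤ) → ℝ}
    (hψ : ∀ y, Continuous fun s => ψ s y) (x : Fin m → ℤ) :
    Continuous fun s => M.runningReward pol s x + M.generator pol (M.discount ψ) s x :=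
  (M.continuous_runningReward pol x).add (M.continuous_generator pol (M.continuous_discount hψ) x)

theorem continuous_Lop {ψ : ℝ → (Fin m → ℤ) → ℝ} (hψ : ∀ y, Continuous fun s => ψ s y)
    (x : Fin m → ℤ) : Continuous fun t => M.Lop pol ψ t x :=
  (by fun_prop : Continuous fun t => Real.exp ((2 * M.lam + 1) * t)).mul
    (contDiff_integral_left_of_continuous (M.continuous_Lop_integrand pol hψ x) M.T).continuous

theorem discount_eq_integral_of_Lop_eq {ψ : ℝ → (Fin m → ℤ) → ℝ} {t : ℝ} {x : Fin m → ℤ}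
    (h : M.Lop pol ψ t x = ψ t x) :
    M.discount ψ t x
      = ∫ s in t..M.T, (M.runningReward pol s x + M.generator pol (M.discount ψ) s x) := by
  rw [discount, ← h, Lop_eq, ← mul_assoc, ← Real.exp_add, neg_add_cancel, Real.exp_zero,
    one_mul]

theorem dvt_add_sum_H_add_ent_eq_zero {ψ : ℝ → (Fin m → ℤ) → ℝ}
    (hψ : ∀ y, Continuous fun s => ψ s y) {x : Fin m → ℤ}
    (hfix : ∀ t ∈ Icc 0 M.T, M.Lop pol ψ t x = ψ t x) {t : ℝ} (ht : t ∈ Icc 0 M.T) :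
    M.dvt (M.discount ψ) t x + ∑ S ∈ M.feas x, M.H t x S (M.discount ψ) * pol.π t x S
      + M.gamma * M.ent pol t x = 0 := by
  have hEq : EqOn (fun s => M.discount ψ s x)
      (fun u => ∫ s in u..M.T, (M.runningReward pol s x + M.generator pol (M.discount ψ) s x))
      (Icc 0 M.T) := fun u hu => M.discount_eq_integral_of_Lop_eq pol (hfix u hu)
  have hderiv : M.dvt (M.discount ψ) t x
      = -(M.runningReward pol t x + M.generator pol (M.discount ψ) t x) := by
    rw [NRM.dvt, derivWithin_congr hEq (hEq ht),
      (hasDerivAt_integral_left_of_continuous (M.continuous_Lop_integrand pol hψ x) M.T t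
        ).hasDerivWithinAt.derivWithin (uniqueDiffOn_Icc M.T_pos t ht)]
  rw [hderiv, sum_H_mul_π, runningReward]
  ring

theorem discount_T_eq_zero_of_Lop_eq {ψ : ℝ → (Fin m → ℤ) → ℝ} {x : Fin m → ℤ}
    (h : M.Lop pol ψ M.T x = ψ M.T x) : M.discount ψ M.T x = 0 := by
  rw [M.discount_eq_integral_of_Lop_eq pol h, intervalIntegral.integral_same]

-- The values off `[0,T] × 𝒳` are immaterial: `ℒψ` at `(t, x)` only reads `ψ` on `[t,T] × 𝒳`.
noncomputable def extend (f : C(Icc 0 M.T, M.States → ℝ)) : ℝ → (Fin m → ℤ) → ℝ :=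
  fun t x => if hx : x ∈ M.States then f (projIcc 0 M.T M.T_pos.le t) ⟨x, hx⟩ else 0

variable {M}

theorem continuous_extend (f : C(Icc 0 M.T, M.States → ℝ)) (x : Fin m → ℤ) :
    Continuous fun t => M.extend f t x := by
  by_cases hx : x ∈ M.States
  · simp only [extend, dif_pos hx]
    exact (continuous_apply _).comp ((map_continuous f).comp continuous_projIcc)
  · simp only [extend, dif_neg hx]
    exact continuous_const

theorem extend_apply (f : C(Icc 0 M.T, M.States → ℝ)) {t : ℝ} (ht : t ∈ Icc 0 M.T)
    {x : Fin m → ℤ} (hx : x ∈ M.States) : M.extend f t x = f ⟨t, ht⟩ ⟨x, hx⟩ := by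
  rw [extend, dif_pos hx, projIcc_of_mem M.T_pos.le ht]

theorem abs_extend_sub_le (f g : C(Icc 0 M.T, M.States → ℝ)) {t : ℝ} (ht : t ∈ Icc 0 M.T)
    {x : Fin m → ℤ} (hx : x ∈ M.States) : |M.extend f t x - M.extend g t x| ≤ dist f g := by
  rw [extend_apply f ht hx, extend_apply g ht hx, ← Real.dist_eq]
  exact (dist_le_pi_dist _ _ _).trans (ContinuousMap.dist_apply_le_dist _)

variable (M)

noncomputable def LopC (f : C(Icc 0 M.T, M.States → ℝ)) : C(Icc 0 M.T, M.States → ℝ) where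
  toFun t y := M.Lop pol (M.extend f) t y
  continuous_toFun := continuous_pi fun y =>
    (M.continuous_Lop pol (continuous_extend f) y).comp continuous_subtype_val

theorem contractingWith_LopC :
    ContractingWith ⟨2 * M.lam / (2 * M.lam + 1), M.contraction_nonneg⟩ (M.LopC pol) := by
  refine ⟨M.contraction_lt_one, LipschitzWith.of_dist_le_mul fun f g => ?_⟩
  have hd := mul_nonneg M.contraction_nonneg (dist_nonneg (x := f) (y := g))
  refine (ContinuousMap.dist_le hd).2 fun t => (dist_pi_le_iff hd).2 fun y => ?_
  rw [Real.dist_eq]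
  have hint := fun h : C(Icc 0 M.T, M.States → ℝ) =>
    (M.continuous_generator pol (M.continuous_discount (continuous_extend h)) y).intervalIntegrable
      (μ := volume) t M.T
  exact M.abs_Lop_sub_le pol t.2.2 (hint f) (hint g) fun s hs z hz =>
    abs_extend_sub_le f g ⟨t.2.1.trans hs.1, hs.2⟩ hz

noncomputable def psiStar : ℝ → (Fin m → ℤ) → ℝ :=
  M.extend ((M.contractingWith_LopC pol).fixedPoint (M.LopC pol))

theorem continuous_psiStar (y : Fin m → ℤ) : Continuous fun t => M.psiStar pol t y :=
  continuous_extend _ y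

theorem bounded_psiStar :
    ∃ C, ∀ t ∈ Icc 0 M.T, ∀ x ∈ M.States, |M.psiStar pol t x| ≤ C := by
  refine ⟨‖(M.contractingWith_LopC pol).fixedPoint (M.LopC pol)‖, fun t ht x hx => ?_⟩
  rw [psiStar, extend_apply _ ht hx, ← Real.norm_eq_abs]
  exact (norm_le_pi_norm _ _).trans (ContinuousMap.norm_coe_le_norm _ _)

theorem Lop_psiStar {t : ℝ} (ht : t ∈ Icc 0 M.T) {x : Fin m → ℤ} (hx : x ∈ M.States) :
    M.Lop pol (M.psiStar pol) t x = M.psiStar pol t x := by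
  have hfix := (M.contractingWith_LopC pol).fixedPoint_isFixedPt (f := M.LopC pol)
  rw [psiStar, extend_apply _ ht hx]
  exact congrFun (congrFun (congrArg DFunLike.coe hfix) ⟨t, ht⟩) ⟨x, hx⟩

end NRM

/-- For every admissible policy `π`, the system of differential equations
`∂v/∂t (t,x) + ∑_{S ∈ 𝒜(x)} H(t,x,S,v) π(S|t,x) + γ ℋ(π(·|t,x)) = 0` on
`[0,T) × 𝒳` with terminal condition `v(T,x) = 0` admits a solution
`v ∈ C^{1,0}([0,T] × 𝒳)`, namely `v(t,x) = e^{-βt} ψ*(t,x)` where `β = 2λ+1` and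
`ψ*` is the (unique, among bounded measurable functions) fixed point of the
contraction `ℒ` on `B([0,T] × 𝒳)`. -/
theorem exists_solution_ode {m n : ℕ} (M : NRM m n) (pol : Policy M) :
    ∃ ψstar : ℝ → (Fin m → ℤ) → ℝ,
      -- ψ* belongs to B([0,T] × 𝒳)
      (∀ x, Measurable fun t => ψstar t x) ∧
      (∃ C, ∀ t ∈ Set.Icc (0:ℝ) M.T, ∀ x ∈ M.States, |ψstar t x| ≤ C) ∧
      -- ψ* is a fixed point of ℒ
      (∀ t ∈ Set.Icc (0:ℝ) M.T, ∀ x ∈ M.States, M.Lop pol ψstar t x = ψstar t x) ∧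
      -- the fixed point of ℒ in B([0,T] × 𝒳) is unique
      (∀ ψ' : ℝ → (Fin m → ℤ) → ℝ,
        (∀ x, Measurable fun t => ψ' t x) →
        (∃ C, ∀ t ∈ Set.Icc (0:ℝ) M.T, ∀ x ∈ M.States, |ψ' t x| ≤ C) →
        (∀ t ∈ Set.Icc (0:ℝ) M.T, ∀ x ∈ M.States, M.Lop pol ψ' t x = ψ' t x) →
        ∀ t ∈ Set.Icc (0:ℝ) M.T, ∀ x ∈ M.States, ψ' t x = ψstar t x) ∧
      -- v(t,x) = e^{-βt} ψ*(t,x) is a C^{1,0} solution of the ODE system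
      (M.C10 (fun t x => Real.exp (-((2 * M.lam + 1) * t)) * ψstar t x) ∧
        (∀ t ∈ Set.Ico (0:ℝ) M.T, ∀ x ∈ M.States,
          M.dvt (fun s y => Real.exp (-((2 * M.lam + 1) * s)) * ψstar s y) t x
            + (∑ S ∈ M.feas x,
                M.H t x S (fun s y => Real.exp (-((2 * M.lam + 1) * s)) * ψstar s y)
                  * pol.π t x S)
            + M.gamma * M.ent pol t x = 0) ∧
        (∀ x ∈ M.States,
          Real.exp (-((2 * M.lam + 1) * M.T)) * ψstar M.T x = 0)) := by
  have hcont := M.continuous_psiStar pol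
  have hfix : ∀ t ∈ Set.Icc (0:ℝ) M.T, ∀ x ∈ M.States,
      M.Lop pol (M.psiStar pol) t x = M.psiStar pol t x :=
    fun t ht x hx => M.Lop_psiStar pol ht hx
  refine ⟨M.psiStar pol, fun x => (hcont x).measurable, M.bounded_psiStar pol, hfix,
    fun ψ' hm' hb' hfix' => M.eq_of_Lop_fixed pol hm' (fun x => (hcont x).measurable) hb'
      (M.bounded_psiStar pol) hfix' hfix, fun x hx => ?_, fun t ht x hx => ?_,
    fun x hx => M.discount_T_eq_zero_of_Lop_eq pol (hfix _ (right_mem_Icc.2 M.T_pos.le) x hx)⟩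
  · exact (contDiff_integral_left_of_continuous (M.continuous_Lop_integrand pol hcont x)
      M.T).contDiffOn.congr fun t ht => M.discount_eq_integral_of_Lop_eq pol (hfix t ht x hx)
  · exact M.dvt_add_sum_H_add_ent_eq_zero pol hcont (fun t ht => hfix t ht x hx)
      (Set.Ico_subset_Icc_self ht)

end RLNRM
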